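/- arXiv:1006.3408 — 2 statements merged into one kernel-verified Lean document; each statement's English description precedes it below -/
import Mathlib

section
/- The AGM iteration is invariant under one step: for a ≥ b > 0, ∫₀^{π/2} dφ / √(a² cos²φ + b² sin²φ) = ∫₀^{π/2} dφ / √(a₁² cos²φ + b₁² sin²φ), where a₁ = (a+b)/2 and b₁ = √(ab). -/
/-!
Gauss's substitution `sin ψ = 2a sin φ / (a + b + (a - b) sin² φ)` maps `[0, π/2]` monotonically
onto itself. Writing `s = sin φ`, `c = cos φ`, `D = a + b + (a - b) s²`, `E = a + b - (a - b) s²`,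
it turns the quadratic form into a square, `a² cos² ψ + b² sin² ψ = (a E / D)²`, and since
`cos ψ = 2c √(a₁² c² + a b s²) / D` with `a₁ = (a + b) / 2`, its derivative is
`dψ/dφ = (a E / D) / √(a₁² c² + a b s²)`. The factors `a E / D` cancel, which is the invariance.
-/

open Real

noncomputable def ellipticIntegrand (a b φ : ℝ) : ℝ :=
  1 / √(a ^ 2 * cos φ ^ 2 + b ^ 2 * sin φ ^ 2)

theorem ellipticIntegrand_nonneg (a b φ : ℝ) : 0 ≤ ellipticIntegrand a b φ := by
  unfold ellipticIntegrand
  positivity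

noncomputable def gaussSubst (a b φ : ℝ) : ℝ :=
  arcsin (2 * a * sin φ / (a + b + (a - b) * sin φ ^ 2))

theorem gaussSubst_zero (a b : ℝ) : gaussSubst a b 0 = 0 := by
  simp [gaussSubst]

theorem gaussSubst_pi_div_two {a : ℝ} (b : ℝ) (ha : 0 < a) : gaussSubst a b (π / 2) = π / 2 := by
  rw [gaussSubst, sin_pi_div_two, ← arcsin_one]
  congr 1
  rw [div_eq_one_iff_eq (by linarith)]
  ring

section GaussSubstitution

variable {a b : ℝ}

theorem gauss_denom_pos (ha : 0 < a) (hb : 0 < b) {s : ℝ} (hs : s ^ 2 ≤ 1) :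
    0 < a + b + (a - b) * s ^ 2 := by
  nlinarith

theorem gauss_factor_pos (ha : 0 < a) (hb : 0 < b) {s : ℝ} (hs : s ^ 2 ≤ 1) :
    0 < a * (a + b - (a - b) * s ^ 2) / (a + b + (a - b) * s ^ 2) := by
  have hE : 0 < a + b - (a - b) * s ^ 2 := by linarith [gauss_denom_pos hb ha hs]
  have := gauss_denom_pos ha hb hs
  positivity

theorem one_sub_gauss_ratio_sq {s c : ℝ} (hsc : s ^ 2 + c ^ 2 = 1)
    (hD : a + b + (a - b) * s ^ 2 ≠ 0) :
    1 - (2 * a * s / (a + b + (a - b) * s ^ 2)) ^ 2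
      = (2 * c / (a + b + (a - b) * s ^ 2)) ^ 2
          * (((a + b) / 2) ^ 2 * c ^ 2 + a * b * s ^ 2) := by
  generalize hD' : a + b + (a - b) * s ^ 2 = D at hD
  field_simp
  subst hD'
  linear_combination (-(a + b) ^ 2 * (c ^ 2 + 1 - s ^ 2) - 4 * a * b * s ^ 2) * hsc

theorem gauss_quadForm_eq_sq {s : ℝ} (hD : a + b + (a - b) * s ^ 2 ≠ 0) :
    a ^ 2 * (1 - (2 * a * s / (a + b + (a - b) * s ^ 2)) ^ 2)
        + b ^ 2 * (2 * a * s / (a + b + (a - b) * s ^ 2)) ^ 2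
      = (a * (a + b - (a - b) * s ^ 2) / (a + b + (a - b) * s ^ 2)) ^ 2 := by
  generalize hD' : a + b + (a - b) * s ^ 2 = D at hD
  field_simp
  subst hD'
  ring

theorem gauss_ratio_mem_Icc (ha : 0 < a) (hb : 0 < b) (φ : ℝ) :
    2 * a * sin φ / (a + b + (a - b) * sin φ ^ 2) ∈ Set.Icc (-1) 1 := by
  have hD := gauss_denom_pos ha hb (sin_sq_le_one φ)
  rw [Set.mem_Icc, ← abs_le, ← sq_le_one_iff_abs_le_one, ← sub_nonneg,
    one_sub_gauss_ratio_sq (sin_sq_add_cos_sq φ) hD.ne']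
  positivity

theorem sqrt_one_sub_gauss_ratio_sq (ha : 0 < a) (hb : 0 < b) {φ : ℝ} (hφ : 0 ≤ cos φ) :
    √(1 - (2 * a * sin φ / (a + b + (a - b) * sin φ ^ 2)) ^ 2)
      = 2 * cos φ / (a + b + (a - b) * sin φ ^ 2)
          * √(((a + b) / 2) ^ 2 * cos φ ^ 2 + √(a * b) ^ 2 * sin φ ^ 2) := by
  have hD := gauss_denom_pos ha hb (sin_sq_le_one φ)
  rw [one_sub_gauss_ratio_sq (sin_sq_add_cos_sq φ) hD.ne', sq_sqrt (by positivity),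
    sqrt_mul (sq_nonneg _), sqrt_sq (by positivity)]

theorem sin_gaussSubst (ha : 0 < a) (hb : 0 < b) (φ : ℝ) :
    sin (gaussSubst a b φ) = 2 * a * sin φ / (a + b + (a - b) * sin φ ^ 2) :=
  sin_arcsin' (gauss_ratio_mem_Icc ha hb φ)

theorem ellipticIntegrand_gaussSubst (ha : 0 < a) (hb : 0 < b) (φ : ℝ) :
    ellipticIntegrand a b (gaussSubst a b φ)
      = (a * (a + b - (a - b) * sin φ ^ 2) / (a + b + (a - b) * sin φ ^ 2))⁻¹ := by
  have hD := gauss_denom_pos ha hb (sin_sq_le_one φ)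
  rw [ellipticIntegrand, cos_sq', sin_gaussSubst ha hb, gauss_quadForm_eq_sq hD.ne',
    sqrt_sq (gauss_factor_pos ha hb (sin_sq_le_one φ)).le, one_div]

theorem continuous_gaussSubst (ha : 0 < a) (hb : 0 < b) : Continuous (gaussSubst a b) :=
  continuous_arcsin.comp <| by
    fun_prop (disch := exact fun φ ↦ (gauss_denom_pos ha hb (sin_sq_le_one φ)).ne')

theorem hasDerivAt_gauss_ratio (ha : 0 < a) (hb : 0 < b) (φ : ℝ) :
    HasDerivAt (fun φ ↦ 2 * a * sin φ / (a + b + (a - b) * sin φ ^ 2))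
      (2 * a * cos φ * (a + b - (a - b) * sin φ ^ 2) / (a + b + (a - b) * sin φ ^ 2) ^ 2) φ := by
  have hD := gauss_denom_pos ha hb (sin_sq_le_one φ)
  refine (((hasDerivAt_sin φ).const_mul (2 * a)).div
    (((hasDerivAt_sin φ).fun_pow 2).const_mul (a - b) |>.const_add (a + b)) hD.ne').congr_deriv ?_
  push_cast
  ring

theorem hasDerivAt_gaussSubst (ha : 0 < a) (hb : 0 < b) {φ : ℝ} (hφ : 0 < cos φ) :
    HasDerivAt (gaussSubst a b)
      (a * (a + b - (a - b) * sin φ ^ 2) / (a + b + (a - b) * sin φ ^ 2)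
        * ellipticIntegrand ((a + b) / 2) √(a * b) φ) φ := by
  have hD := gauss_denom_pos ha hb (sin_sq_le_one φ)
  have hroot := sqrt_one_sub_gauss_ratio_sq ha hb hφ.le
  have hR : 0 < ((a + b) / 2) ^ 2 * cos φ ^ 2 + √(a * b) ^ 2 * sin φ ^ 2 := by positivity
  have hw : (2 * a * sin φ / (a + b + (a - b) * sin φ ^ 2)) ^ 2 < 1 := by
    rw [← sub_pos, ← sqrt_pos, hroot]
    positivity
  obtain ⟨hw₁, hw₂⟩ := abs_lt.mp (sq_lt_one_iff_abs_lt_one _ |>.mp hw)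
  refine ((hasDerivAt_arcsin hw₁.ne' hw₂.ne).comp φ
    (hasDerivAt_gauss_ratio ha hb φ)).congr_deriv ?_
  rw [hroot, ellipticIntegrand]
  field_simp

theorem ellipticIntegrand_gaussSubst_mul_deriv (ha : 0 < a) (hb : 0 < b) (φ : ℝ) :
    ellipticIntegrand a b (gaussSubst a b φ)
        * (a * (a + b - (a - b) * sin φ ^ 2) / (a + b + (a - b) * sin φ ^ 2)
          * ellipticIntegrand ((a + b) / 2) √(a * b) φ)
      = ellipticIntegrand ((a + b) / 2) √(a * b) φ := by
  rw [ellipticIntegrand_gaussSubst ha hb,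
    inv_mul_cancel_left₀ (gauss_factor_pos ha hb (sin_sq_le_one φ)).ne']

end GaussSubstitution

/-- Invariance of the elliptic integral under one step of the AGM iteration. -/
theorem agm_integral_invariant (a b : ℝ) (hb : 0 < b) (hab : b ≤ a) :
    ∫ φ in (0:ℝ)..(π / 2),
        1 / Real.sqrt (a ^ 2 * Real.cos φ ^ 2 + b ^ 2 * Real.sin φ ^ 2)
      = ∫ φ in (0:ℝ)..(π / 2),
          1 / Real.sqrt (((a + b) / 2) ^ 2 * Real.cos φ ^ 2
            + Real.sqrt (a * b) ^ 2 * Real.sin φ ^ 2) := by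
  have ha : 0 < a := hb.trans_le hab
  have hpi : (0 : ℝ) ≤ π / 2 := by positivity
  have hcos : ∀ φ ∈ Set.Ioo (min 0 (π / 2)) (max 0 (π / 2)), 0 < cos φ := by
    rw [min_eq_left hpi, max_eq_right hpi]
    exact fun φ hφ ↦ cos_pos_of_mem_Ioo ⟨by linarith [hφ.1], hφ.2⟩
  have hsubst := intervalIntegral.integral_comp_mul_deriv_of_deriv_nonneg
    (g := ellipticIntegrand a b) (continuous_gaussSubst ha hb).continuousOn
    (fun φ hφ ↦ hasDerivAt_gaussSubst ha hb (hcos φ hφ))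
    (fun φ _ ↦ mul_nonneg (gauss_factor_pos ha hb (sin_sq_le_one φ)).le
      (ellipticIntegrand_nonneg _ _ φ))
  simp only [Function.comp_apply, ellipticIntegrand_gaussSubst_mul_deriv ha hb,
    gaussSubst_zero, gaussSubst_pi_div_two b ha] at hsubst
  exact hsubst.symm
end

section
/- In the Richelot iteration with real ordered roots, the sequences (a_n), (a'_n) defined by (a_{n+1}, a'_{n+1}) = (v_n, w_n) (and analogously for the other pairs per the interlacing inequalities) converge pairwise to common limits: lim a_n = lim a'_n, lim b_n = lim b'_n, lim c_n = lim c'_n. -/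
/-!
By the interlacing each of the six sequences is monotone and bounded, so they converge, to limits
`α ≤ α' < β ≤ β' < γ ≤ γ'`. The bracket `[P, Q] = P' Q - Q' P` of two monic quadratics is polynomial
in their roots, so `[R, P](aₙ₊₁) = 0` passes to the limit, where `aₙ₊₁` and the root `aₙ` of `P` both
tend to `α`. At a root of `P` the bracket is `-P'(α) R(α) = (α' - α) R(α)` with `R(α) ≠ 0`, so
`α = α'`. Likewise `[Q, R](b'ₙ₊₁) = 0` gives `β = β'` and `[R, P](c'ₙ₊₁) = 0` gives `γ = γ'`.
-/

open Filter Topology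

theorem exists_tendsto_of_monotone_of_antitone {ι α : Type*} [SemilatticeSup ι] [Nonempty ι]
    [ConditionallyCompleteLinearOrder α] [TopologicalSpace α] [OrderTopology α] {x y : ι → α}
    (hx : Monotone x) (hy : Antitone y) (hxy : ∀ i, x i ≤ y i) :
    ∃ l l', Tendsto x atTop (𝓝 l) ∧ Tendsto y atTop (𝓝 l') ∧ l ≤ l' := by
  have hle : ∀ i j, x i ≤ y j := fun i j =>
    (hx le_sup_left).trans <| (hxy (i ⊔ j)).trans (hy le_sup_right)
  have hxlim := tendsto_atTop_ciSup hx ⟨y (Classical.arbitrary ι), by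
    rintro _ ⟨i, rfl⟩; exact hle i _⟩
  have hylim := tendsto_atTop_ciInf hy ⟨x (Classical.arbitrary ι), by
    rintro _ ⟨j, rfl⟩; exact hle _ j⟩
  exact ⟨_, _, hxlim, hylim, le_of_tendsto_of_tendsto' hxlim hylim hxy⟩

theorem deriv_sub_mul_sub (a b x : ℝ) :
    deriv (fun x : ℝ => (x - a) * (x - b)) x = (x - a) + (x - b) := by
  have h := ((hasDerivAt_id x).sub_const a).fun_mul ((hasDerivAt_id x).sub_const b)
  simp only [id, mul_one, one_mul] at h
  rw [h.deriv, add_comm]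

/-- `[P, Q](x) = P'(x) Q(x) - Q'(x) P(x)` for `P = (X - a)(X - a')` and `Q = (X - b)(X - b')`. -/
def quadBracket (a a' b b' x : ℝ) : ℝ :=
  ((x - a) + (x - a')) * ((x - b) * (x - b')) - ((x - b) + (x - b')) * ((x - a) * (x - a'))

theorem quadBracket_swap_left (a a' b b' x : ℝ) :
    quadBracket a' a b b' x = quadBracket a a' b b' x := by
  unfold quadBracket; ring

theorem quadBracket_antisymm (a a' b b' x : ℝ) :
    quadBracket b b' a a' x = -quadBracket a a' b b' x := by
  unfold quadBracket; ring

theorem quadBracket_self_left (a a' b b' : ℝ) :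
    quadBracket a a' b b' a = (a - a') * ((a - b) * (a - b')) := by
  unfold quadBracket; ring

theorem deriv_mul_sub_deriv_mul_eq_quadBracket (a a' b b' x : ℝ) :
    deriv (fun x : ℝ => (x - a) * (x - a')) x * ((x - b) * (x - b'))
      - deriv (fun x : ℝ => (x - b) * (x - b')) x * ((x - a) * (x - a'))
      = quadBracket a a' b b' x := by
  rw [deriv_sub_mul_sub, deriv_sub_mul_sub, quadBracket]

theorem Filter.Tendsto.quadBracket {ι : Type*} {l : Filter ι} {a a' b b' x : ι → ℝ}
    {α α' β β' ξ : ℝ} (ha : Tendsto a l (𝓝 α)) (ha' : Tendsto a' l (𝓝 α'))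
    (hb : Tendsto b l (𝓝 β)) (hb' : Tendsto b' l (𝓝 β')) (hx : Tendsto x l (𝓝 ξ)) :
    Tendsto (fun i => _root_.quadBracket (a i) (a' i) (b i) (b' i) (x i)) l
      (𝓝 (_root_.quadBracket α α' β β' ξ)) :=
  (((hx.sub ha).add (hx.sub ha')).mul ((hx.sub hb).mul (hx.sub hb'))).sub
    (((hx.sub hb).add (hx.sub hb')).mul ((hx.sub ha).mul (hx.sub ha')))

theorem eq_of_tendsto_of_quadBracket_eq_zero {a a' b b' : ℕ → ℝ} {α α' β β' : ℝ}
    (ha : Tendsto a atTop (𝓝 α)) (ha' : Tendsto a' atTop (𝓝 α'))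
    (hb : Tendsto b atTop (𝓝 β)) (hb' : Tendsto b' atTop (𝓝 β'))
    (h : ∀ n, quadBracket (a n) (a' n) (b n) (b' n) (a (n + 1)) = 0)
    (hβ : α ≠ β) (hβ' : α ≠ β') : α = α' := by
  have hlim : quadBracket α α' β β' α = 0 := tendsto_nhds_unique
    ((ha.quadBracket ha' hb hb' ((tendsto_add_atTop_iff_nat 1).2 ha)).congr h) tendsto_const_nhds
  rw [quadBracket_self_left] at hlim
  simpa [sub_eq_zero, hβ, hβ'] using hlim

/-- Convergence of the Richelot (genus-2 AGM) iteration: the six sequences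
of branch points converge pairwise to common limits. -/
theorem richelot_iteration_converges
    (A A' B B' C C' : ℕ → ℝ)
    (horder : ∀ n, A n < A' n ∧ A' n < B n ∧ B n < B' n ∧ B' n < C n ∧ C n < C' n)
    -- the new values are roots of the Richelot brackets of the current quadratics
    (hroots : ∀ n,
      let P : ℝ → ℝ := fun x => (x - A n) * (x - A' n)
      let Q : ℝ → ℝ := fun x => (x - B n) * (x - B' n)
      let R : ℝ → ℝ := fun x => (x - C n) * (x - C' n)
      let U : ℝ → ℝ := fun x => deriv Q x * R x - deriv R x * Q x
      let V : ℝ → ℝ := fun x => deriv R x * P x - deriv P x * R x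
      let W : ℝ → ℝ := fun x => deriv P x * Q x - deriv Q x * P x
      V (A (n + 1)) = 0 ∧ W (A' (n + 1)) = 0 ∧ W (B (n + 1)) = 0 ∧
      U (B' (n + 1)) = 0 ∧ U (C (n + 1)) = 0 ∧ V (C' (n + 1)) = 0)
    -- interlacing: each new pair is nested inside the old one
    (hnest : ∀ n, A n ≤ A (n + 1) ∧ A' (n + 1) ≤ A' n ∧
      B n ≤ B (n + 1) ∧ B' (n + 1) ≤ B' n ∧
      C n ≤ C (n + 1) ∧ C' (n + 1) ≤ C' n) :
    ∃ la lb lc : ℝ,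
      Tendsto A atTop (𝓝 la) ∧ Tendsto A' atTop (𝓝 la) ∧
      Tendsto B atTop (𝓝 lb) ∧ Tendsto B' atTop (𝓝 lb) ∧
      Tendsto C atTop (𝓝 lc) ∧ Tendsto C' atTop (𝓝 lc) := by
  have hbracket n : quadBracket (A n) (A' n) (C n) (C' n) (A (n + 1)) = 0 ∧
      quadBracket (B' n) (B n) (C n) (C' n) (B' (n + 1)) = 0 ∧
      quadBracket (C' n) (C n) (A n) (A' n) (C' (n + 1)) = 0 := by
    obtain ⟨hA, -, -, hB', -, hC'⟩ := hroots n
    simp only [deriv_mul_sub_deriv_mul_eq_quadBracket] at hA hB' hC'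
    exact ⟨by rw [quadBracket_antisymm, hA, neg_zero], by rwa [quadBracket_swap_left],
      by rwa [quadBracket_swap_left]⟩
  have hA := monotone_nat_of_le_succ fun n => (hnest n).1
  have hA' := antitone_nat_of_succ_le fun n => (hnest n).2.1
  have hB := monotone_nat_of_le_succ fun n => (hnest n).2.2.1
  have hB' := antitone_nat_of_succ_le fun n => (hnest n).2.2.2.1
  have hC := monotone_nat_of_le_succ fun n => (hnest n).2.2.2.2.1
  obtain ⟨α, α', hα, hα', hαα'⟩ := exists_tendsto_of_monotone_of_antitone hA hA'
    fun n => (horder n).1.le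
  obtain ⟨β, β', hβ, hβ', hββ'⟩ := exists_tendsto_of_monotone_of_antitone hB hB'
    fun n => (horder n).2.2.1.le
  obtain ⟨γ, γ', hγ, hγ', hγγ'⟩ := exists_tendsto_of_monotone_of_antitone hC
    (antitone_nat_of_succ_le fun n => (hnest n).2.2.2.2.2) fun n => (horder n).2.2.2.2.le
  have hα'β : α' < β := ((hA'.le_of_tendsto hα' 0).trans_lt (horder 0).2.1).trans_le
    (hB.ge_of_tendsto hβ 0)
  have hβ'γ : β' < γ := ((hB'.le_of_tendsto hβ' 0).trans_lt (horder 0).2.2.2.1).trans_le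
    (hC.ge_of_tendsto hγ 0)
  have hαeq : α = α' := eq_of_tendsto_of_quadBracket_eq_zero hα hα' hγ hγ'
    (fun n => (hbracket n).1) (by order) (by order)
  have hβeq : β' = β := eq_of_tendsto_of_quadBracket_eq_zero hβ' hβ hγ hγ'
    (fun n => (hbracket n).2.1) (by order) (by order)
  have hγeq : γ' = γ := eq_of_tendsto_of_quadBracket_eq_zero hγ' hγ hα hα'
    (fun n => (hbracket n).2.2) (by order) (by order)
  exact ⟨α, β, γ, hα, hαeq ▸ hα', hβ, hβeq ▸ hβ', hγ, hγeq ▸ hγ'⟩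
end
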